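/- arXiv:2411.14129 — 6 statements merged into one kernel-verified Lean document; each statement's English description precedes it below -/
import Mathlib

section
/- Let K be the unit ball of a 2-dimensional real normed space, and suppose K ⊆ K_1 ∪ K_2 ∪ K_3 ∪ K_4 where each K_i is a homothetic copy of K with ratio √2/2 (so diam K_i = √2 in the norm). Then for any Borel probability measure ν on K, Δ(ν) = ∫∫ |x−y| dν(x) dν(y) ≤ 2 − (2 − √2)/4 = 3/2 + √2/4. -/
open MeasureTheory Pointwise Function

/-! Make the four pieces disjoint and write `ν(P i) = p i`. Two points of `K` are at distance at
most `2`, and at most `√2` when they lie in a common piece, so integrating over `ν ⊗ ν` gives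
`Δ(ν) ≤ 2 - (2 - √2) ∑ p i ^ 2`; since `∑ p i = 1`, Cauchy–Schwarz gives `∑ p i ^ 2 ≥ 1 / 4`. -/

theorem MeasurableSet.disjointed_of_locallyFiniteOrderBot {α ι : Type*} [MeasurableSpace α]
    [Preorder ι] [LocallyFiniteOrderBot ι] {f : ι → Set α} (h : ∀ i, MeasurableSet (f i))
    (i : ι) : MeasurableSet (disjointed f i) := by
  rw [disjointed_apply, Finset.sup_set_eq_biUnion]
  exact (h i).diff (Finset.measurableSet_biUnion _ fun j _ => h j)

theorem inv_card_le_sum_sq_of_sum_eq_one {ι : Type*} [Fintype ι] {p : ι → ℝ}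
    (hp : ∑ i, p i = 1) : (Fintype.card ι : ℝ)⁻¹ ≤ ∑ i, p i ^ 2 := by
  have hcs := sq_sum_le_card_mul_sum_sq (s := Finset.univ) (f := p)
  rw [hp, one_pow, Finset.card_univ] at hcs
  rcases (Nat.cast_nonneg (α := ℝ) (Fintype.card ι)).eq_or_lt with h0 | hpos
  · rw [← h0, inv_zero]; positivity
  · rwa [inv_le_iff_one_le_mul₀' hpos]

section PairDistance

variable {X ι : Type*} {P : ι → Set X} {d D : ℝ}

section Measure

variable [MeasurableSpace X] (ν : Measure X) [IsProbabilityMeasure ν]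
  (hPm : ∀ i, MeasurableSet (P i))
include hPm

theorem integrable_indicator_prod_self (i : ι) :
    Integrable ((P i ×ˢ P i).indicator (1 : X × X → ℝ)) (ν.prod ν) :=
  (integrable_const 1).indicator ((hPm i).prod (hPm i))

variable [Fintype ι]

theorem integrable_sub_mul_sum_indicator_prod_self :
    Integrable (fun z => D - (D - d) * ∑ i, (P i ×ˢ P i).indicator 1 z) (ν.prod ν) :=
  (integrable_const D).sub
    ((integrable_finsetSum _ fun i _ => integrable_indicator_prod_self ν hPm i).const_mul _)

theorem integral_sub_mul_sum_indicator_prod_self :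
    ∫ z, D - (D - d) * ∑ i, (P i ×ˢ P i).indicator 1 z ∂(ν.prod ν)
      = D - (D - d) * ∑ i, ν.real (P i) ^ 2 := by
  rw [integral_sub (integrable_const D)
      ((integrable_finsetSum _ fun i _ => integrable_indicator_prod_self ν hPm i).const_mul _),
    integral_const, integral_const_mul,
    integral_finsetSum _ fun i _ => integrable_indicator_prod_self ν hPm i]
  simp [integral_indicator_one ((hPm _).prod (hPm _)), measureReal_prod_prod, sq]

end Measure

variable [Fintype ι] [PseudoMetricSpace X]

theorem dist_le_sub_mul_sum_indicator_prod_self (hP : Pairwise (Disjoint on P))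
    (hPd : ∀ i, ∀ x ∈ P i, ∀ y ∈ P i, dist x y ≤ d) {x y : X} (hxy : dist x y ≤ D) :
    dist x y ≤ D - (D - d) * ∑ i, (P i ×ˢ P i).indicator 1 (x, y) := by
  by_cases h : ∃ i, x ∈ P i ∧ y ∈ P i
  · obtain ⟨i, hx, hy⟩ := h
    have hsum : ∑ j, (P j ×ˢ P j).indicator (1 : X × X → ℝ) (x, y) = 1 := by
      rw [Finset.sum_eq_single i]
      · exact Set.indicator_of_mem (Set.mk_mem_prod hx hy) _
      · intro j _ hji
        exact Set.indicator_of_notMem (fun hj => (hP hji).notMem_of_mem_left hj.1 hx) _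
      · simp
    rw [hsum]
    linarith [hPd i x hx y hy]
  · have hsum : ∑ j, (P j ×ˢ P j).indicator (1 : X × X → ℝ) (x, y) = 0 :=
      Finset.sum_eq_zero fun j _ =>
        Set.indicator_of_notMem (fun (hj : (x, y) ∈ P j ×ˢ P j) => h ⟨j, hj⟩) _
    rw [hsum]
    linarith

variable [SecondCountableTopology X] [MeasurableSpace X] [OpensMeasurableSpace X]
  (ν : Measure X) [IsProbabilityMeasure ν] {K : Set X}

theorem integral_integral_dist_le_of_partition (hK : ∀ᵐ x ∂ν, x ∈ K)
    (hKD : ∀ x ∈ K, ∀ y ∈ K, dist x y ≤ D) (hdD : d ≤ D) (hPm : ∀ i, MeasurableSet (P i))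
    (hP : Pairwise (Disjoint on P)) (hPd : ∀ i, ∀ x ∈ P i, ∀ y ∈ P i, dist x y ≤ d)
    (hKP : K ⊆ ⋃ i, P i) :
    ∫ x, ∫ y, dist x y ∂ν ∂ν ≤ D - (D - d) / Fintype.card ι := by
  have hKK : ∀ᵐ z ∂(ν.prod ν), z.1 ∈ K ∧ z.2 ∈ K :=
    (Measure.quasiMeasurePreserving_fst.ae hK).and (Measure.quasiMeasurePreserving_snd.ae hK)
  have hint : Integrable (fun z : X × X => dist z.1 z.2) (ν.prod ν) :=
    .of_bound measurable_dist.aestronglyMeasurable D <| hKK.mono fun z hz => by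
      rw [Real.norm_of_nonneg dist_nonneg]; exact hKD _ hz.1 _ hz.2
  have hmass : ∑ i, ν.real (P i) = 1 := by
    rw [← measureReal_iUnion_fintype hP hPm, measureReal_def,
      (mem_ae_iff_prob_eq_one (MeasurableSet.iUnion hPm)).1 (hK.mono fun x hx => hKP hx)]
    rfl
  calc ∫ x, ∫ y, dist x y ∂ν ∂ν = ∫ z, dist z.1 z.2 ∂(ν.prod ν) := (integral_prod _ hint).symm
    _ ≤ ∫ z, D - (D - d) * ∑ i, (P i ×ˢ P i).indicator 1 z ∂(ν.prod ν) := by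
      refine integral_mono_ae hint ?_ (hKK.mono fun z hz => ?_)
      · exact integrable_sub_mul_sum_indicator_prod_self ν hPm
      · exact dist_le_sub_mul_sum_indicator_prod_self hP hPd (hKD _ hz.1 _ hz.2)
    _ = D - (D - d) * ∑ i, ν.real (P i) ^ 2 := integral_sub_mul_sum_indicator_prod_self ν hPm
    _ ≤ D - (D - d) / Fintype.card ι := by
      rw [div_eq_mul_inv]
      gcongr
      exact inv_card_le_sum_sq_of_sum_eq_one hmass

theorem integral_integral_dist_le_of_cover {n : ℕ} (hK : ∀ᵐ x ∂ν, x ∈ K)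
    (hKD : ∀ x ∈ K, ∀ y ∈ K, dist x y ≤ D) (hdD : d ≤ D) {S : Fin n → Set X}
    (hSm : ∀ i, MeasurableSet (S i)) (hSd : ∀ i, ∀ x ∈ S i, ∀ y ∈ S i, dist x y ≤ d)
    (hKS : K ⊆ ⋃ i, S i) :
    ∫ x, ∫ y, dist x y ∂ν ∂ν ≤ D - (D - d) / n := by
  simpa using integral_integral_dist_le_of_partition ν hK hKD hdD
    (MeasurableSet.disjointed_of_locallyFiniteOrderBot hSm) (disjoint_disjointed S)
    (fun i x hx y hy => hSd i x (disjointed_subset S i hx) y (disjointed_subset S i hy))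
    (by rwa [iUnion_disjointed])

end PairDistance

theorem stmt_3_general {E : Type*} [NormedAddCommGroup E] [NormedSpace ℝ E]
    [MeasurableSpace E] [BorelSpace E] [FiniteDimensional ℝ E]
    (a : Fin 4 → E)
    (hcover : Metric.closedBall (0 : E) 1 ⊆
      ⋃ i, a i +ᵥ (Real.sqrt 2 / 2) • Metric.closedBall (0 : E) 1)
    (ν : Measure E) [IsProbabilityMeasure ν]
    (hν : ν (Metric.closedBall (0 : E) 1) = 1) :
    (∫ x, ∫ y, ‖x - y‖ ∂ν ∂ν) ≤ 3 / 2 + Real.sqrt 2 / 4 := by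
  have hr : 0 ≤ Real.sqrt 2 / 2 := by positivity
  simp only [smul_unitClosedBall_of_nonneg hr, Metric.vadd_closedBall, vadd_eq_add,
    add_zero] at hcover
  have hK : ∀ᵐ x ∂ν, x ∈ Metric.closedBall (0 : E) 1 :=
    (mem_ae_iff_prob_eq_one Metric.isClosed_closedBall.measurableSet).2 hν
  have hdiam {c : E} {r : ℝ} (hr : 0 ≤ r) :
      ∀ x ∈ Metric.closedBall c r, ∀ y ∈ Metric.closedBall c r, dist x y ≤ 2 * r :=
    fun x hx y hy => (Metric.dist_le_diam_of_mem Metric.isBounded_closedBall hx hy).trans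
      (Metric.diam_closedBall hr)
  have hbound := integral_integral_dist_le_of_cover ν hK (mul_one (2 : ℝ) ▸ hdiam zero_le_one)
    (by linarith [Real.sqrt_two_lt_three_halves])
    (fun _ => Metric.isClosed_closedBall.measurableSet) (fun _ => hdiam hr) hcover
  simp only [dist_eq_norm] at hbound
  convert hbound using 1
  push_cast
  ring

theorem stmt_3 {E : Type*} [NormedAddCommGroup E] [NormedSpace ℝ E]
    [MeasurableSpace E] [BorelSpace E] [FiniteDimensional ℝ E]
    (hdim : Module.finrank ℝ E = 2)
    (a : Fin 4 → E)
    (hcover : Metric.closedBall (0 : E) 1 ⊆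
      ⋃ i, a i +ᵥ (Real.sqrt 2 / 2) • Metric.closedBall (0 : E) 1)
    (ν : Measure E) [IsProbabilityMeasure ν]
    (hν : ν (Metric.closedBall (0 : E) 1) = 1) :
    (∫ x, ∫ y, ‖x - y‖ ∂ν ∂ν) ≤ 3 / 2 + Real.sqrt 2 / 4 :=
  stmt_3_general a hcover ν hν
end

section
/- For every natural number n ≥ 3, (1 + 1/(n log n))^n (1 + n log(n log n)) < n log n + n log log n + 5n. -/
theorem stmt_7 (n : ℕ) (hn : 3 ≤ n) :
    (1 + 1 / (n * Real.log n)) ^ n * (1 + n * Real.log (n * Real.log n))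
      < n * Real.log n + n * Real.log (Real.log n) + 5 * n := by
  have hN : (3:ℝ) ≤ (n:ℝ) := by exact_mod_cast hn
  set N : ℝ := (n:ℝ) with hNdef
  have hN0 : 0 < N := by linarith
  have hL : 1 < Real.log N := by
    rw [Real.lt_log_iff_exp_lt hN0]
    have := Real.exp_one_lt_d9
    linarith
  set L : ℝ := Real.log N with hLdef
  have hL0 : 0 < L := by linarith
  have hlogL : 0 < Real.log L := Real.log_pos hL
  have hlogL' : Real.log L ≤ L - 1 := Real.log_le_sub_one_of_pos hL0
  set t : ℝ := 1 / L with htdef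
  have ht0 : 0 < t := by positivity
  have ht1 : t < 1 := by
    rw [htdef, div_lt_one hL0]; linarith
  -- step 1: (1 + 1/(N*L))^n ≤ exp t
  have hx0 : (0:ℝ) < 1 / (N * L) := by positivity
  have h1 : (1 + 1 / (N * L)) ^ n ≤ Real.exp t := by
    have hbase : 1 + 1 / (N * L) ≤ Real.exp (1 / (N * L)) := by
      have := Real.add_one_le_exp (1 / (N * L)); linarith
    calc (1 + 1 / (N * L)) ^ n ≤ (Real.exp (1 / (N * L))) ^ n := by
          apply pow_le_pow_left₀ (by positivity) hbase
      _ = Real.exp (n * (1 / (N * L))) := by rw [Real.exp_nat_mul]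
      _ = Real.exp t := by
          congr 1
          rw [htdef, hNdef]
          field_simp
  -- step 2: exp t ≤ 1 + 2*t  (convexity of exp on [0,1], e < 3)
  have h2 : Real.exp t ≤ 1 + 2 * t := by
    have hc := convexOn_exp.2 (Set.mem_univ (0:ℝ)) (Set.mem_univ (1:ℝ))
      (by linarith : (0:ℝ) ≤ 1 - t) (le_of_lt ht0) (by ring)
    simp only [smul_eq_mul, mul_zero, mul_one, zero_add, Real.exp_zero] at hc
    have he : Real.exp 1 < 3 := by
      have := Real.exp_one_lt_d9; linarith
    nlinarith [Real.exp_pos (1:ℝ)]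
  -- step 3: log (N * L) = L + log L
  have h3 : Real.log (N * L) = L + Real.log L := by
    rw [Real.log_mul (ne_of_gt hN0) (ne_of_gt hL0)]
  have hQ : 0 < 1 + N * Real.log (N * L) := by
    rw [h3]; nlinarith
  have hP : (1 + 1 / (N * L)) ^ n * (1 + N * Real.log (N * L))
      ≤ (1 + 2 * t) * (1 + N * Real.log (N * L)) := by
    apply mul_le_mul_of_nonneg_right (le_trans h1 h2) (le_of_lt hQ)
  -- final arithmetic
  have htL : t * L = 1 := by
    rw [htdef]; field_simp
  calc (1 + 1 / (N * L)) ^ n * (1 + N * Real.log (N * L))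
      ≤ (1 + 2 * t) * (1 + N * Real.log (N * L)) := hP
    _ < N * L + N * Real.log L + 5 * N := by
        rw [h3]
        nlinarith [mul_pos hN0 hlogL, mul_le_mul_of_nonneg_left hlogL' (le_of_lt hN0),
          mul_pos ht0 (mul_pos hN0 hlogL)]
end

section
/- For every natural number n ≥ 3, (1 + 1/(n log n))^n (1 + n log(n log n)) < n log n + n log log n + 2n + 1. -/
open Real

lemma log_lb_of (x a : ℝ) (ha : 0 < a) (hax : a ≤ x) : 1 - 1/a ≤ Real.log x := by
  have hx : 0 < x := lt_of_lt_of_le ha hax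
  have h := Real.one_sub_inv_le_log_of_pos hx
  have h2 : 1/x ≤ 1/a := one_div_le_one_div_of_le ha hax
  rw [inv_eq_one_div] at h
  linarith

lemma log_ub_of (x b : ℝ) (hx : 0 < x) (hxb : x ≤ b) : Real.log x ≤ b - 1 := by
  have := Real.log_le_sub_one_of_pos hx
  linarith

lemma log3_bounds : 1.0986 < Real.log 3 ∧ Real.log 3 < 1.09862 := by
  have h2lo := Real.log_two_gt_d9
  have h2hi := Real.log_two_lt_d9
  have key : Real.log (531441/524288) = 12 * Real.log 3 - 19 * Real.log 2 := by
    rw [show (531441:ℝ)/524288 = 3^12/2^19 by norm_num,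
      Real.log_div (by positivity) (by positivity), Real.log_pow, Real.log_pow]
    push_cast; ring
  have hlo := log_lb_of (531441/524288) (531441/524288) (by norm_num) le_rfl
  have hhi := log_ub_of (531441/524288) (531441/524288) (by norm_num) le_rfl
  rw [key] at hlo hhi
  constructor <;> nlinarith

lemma log5_bounds : 1.6093 < Real.log 5 ∧ Real.log 5 < 1.6096 := by
  have h2lo := Real.log_two_gt_d9
  have h2hi := Real.log_two_lt_d9
  have key : Real.log (128/125) = 7 * Real.log 2 - 3 * Real.log 5 := by
    rw [show (128:ℝ)/125 = 2^7/5^3 by norm_num,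
      Real.log_div (by positivity) (by positivity), Real.log_pow, Real.log_pow]
    push_cast; ring
  have hlo := log_lb_of (128/125) (128/125) (by norm_num) le_rfl
  have hhi := log_ub_of (128/125) (128/125) (by norm_num) le_rfl
  rw [key] at hlo hhi
  constructor <;> nlinarith

lemma log7_bounds : 1.9457 < Real.log 7 ∧ Real.log 7 < 1.9461 := by
  have h2lo := Real.log_two_gt_d9
  have h2hi := Real.log_two_lt_d9
  have h3 := log3_bounds
  have key : Real.log (49/48) = 2 * Real.log 7 - 4 * Real.log 2 - Real.log 3 := by
    rw [show (49:ℝ)/48 = 7^2/(2^4*3) by norm_num,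
      Real.log_div (by positivity) (by positivity), Real.log_mul (by positivity) (by norm_num),
      Real.log_pow, Real.log_pow]
    push_cast; ring
  have hlo := log_lb_of (49/48) (49/48) (by norm_num) le_rfl
  have hhi := log_ub_of (49/48) (49/48) (by norm_num) le_rfl
  rw [key] at hlo hhi
  obtain ⟨h3a, h3b⟩ := h3
  constructor <;> nlinarith

lemma case3 : (1 + 1 / (3 * Real.log 3)) ^ 3 * (1 + 3 * Real.log (3 * Real.log 3))
    < 3 * Real.log 3 + 3 * Real.log (Real.log 3) + 2 * 3 + 1 := by
  obtain ⟨hLlo, hLhi⟩ := log3_bounds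
  have hL0 : (0:ℝ) < Real.log 3 := by linarith
  rw [Real.log_mul (by norm_num) (ne_of_gt hL0)]
  have hllhi : Real.log (Real.log 3) ≤ 1.09862 - 1 := log_ub_of _ _ hL0 (le_of_lt hLhi)
  have hlllo : 1 - 1/1.0986 ≤ Real.log (Real.log 3) := log_lb_of _ _ (by norm_num) (le_of_lt hLlo)
  have hx : 1 + 1/(3*Real.log 3) ≤ 1.30342 := by
    have h1 : 1/(3*Real.log 3) ≤ 1/(3*1.0986) :=
      one_div_le_one_div_of_le (by norm_num) (by linarith)
    have : (1:ℝ)/(3*1.0986) ≤ 0.30342 := by norm_num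
    linarith
  have hx0 : (0:ℝ) ≤ 1 + 1/(3*Real.log 3) := by positivity
  have hpow : (1 + 1/(3*Real.log 3))^3 ≤ 1.30342^3 := pow_le_pow_left₀ hx0 hx 3
  have hF : (0:ℝ) < 1 + 3 * (Real.log 3 + Real.log (Real.log 3)) := by nlinarith
  nlinarith [mul_le_mul hpow
    (show 1 + 3 * (Real.log 3 + Real.log (Real.log 3)) ≤ 4.59172 by nlinarith)
    (le_of_lt hF) (by positivity : (0:ℝ) ≤ (1.30342:ℝ)^3)]

lemma case4 : (1 + 1 / (4 * Real.log 4)) ^ 4 * (1 + 4 * Real.log (4 * Real.log 4))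
    < 4 * Real.log 4 + 4 * Real.log (Real.log 4) + 2 * 4 + 1 := by
  obtain ⟨h3lo, h3hi⟩ := log3_bounds
  have h2lo := Real.log_two_gt_d9
  have h2hi := Real.log_two_lt_d9
  have h4 : Real.log 4 = 2 * Real.log 2 := by
    rw [show (4:ℝ) = 2^2 by norm_num, Real.log_pow]; push_cast; ring
  have hLlo : (1.3862943606:ℝ) ≤ Real.log 4 := by rw [h4]; linarith
  have hLhi : Real.log 4 ≤ 1.3862943616 := by rw [h4]; linarith
  have hL0 : (0:ℝ) < Real.log 4 := by linarith
  rw [Real.log_mul (by norm_num) (ne_of_gt hL0)]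
  have hq0 : (0:ℝ) < 3*Real.log 4/4 := by linarith
  have e1 : Real.log (3*Real.log 4/4 * (4/3)) = Real.log (3*Real.log 4/4) + Real.log (4/3) :=
    Real.log_mul (ne_of_gt hq0) (by norm_num)
  rw [show 3*Real.log 4/4*(4/3) = Real.log 4 by ring] at e1
  have e2 : Real.log ((4:ℝ)/3) = Real.log 4 - Real.log 3 := Real.log_div (by norm_num) (by norm_num)
  have hqlo : (1.0397207:ℝ) ≤ 3*Real.log 4/4 := by linarith
  have hqhi : 3*Real.log 4/4 ≤ 1.0397208 := by linarith
  have hlhi : Real.log (3*Real.log 4/4) ≤ 1.0397208 - 1 := log_ub_of _ _ hq0 hqhi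
  have hllo : 1 - 1/1.0397207 ≤ Real.log (3*Real.log 4/4) := log_lb_of _ _ (by norm_num) hqlo
  have hllo' : (0.038203:ℝ) ≤ Real.log (3*Real.log 4/4) := by
    have : (1:ℝ) - 1/1.0397207 ≥ 0.038203 := by norm_num
    linarith
  have hllhi : Real.log (Real.log 4) ≤ 0.3274152 := by linarith
  have hlllo : 0.3258774 ≤ Real.log (Real.log 4) := by linarith
  have hx : 1 + 1/(4*Real.log 4) ≤ 1.1803369 := by
    have h1 : 1/(4*Real.log 4) ≤ 1/(4*1.3862943606) :=
      one_div_le_one_div_of_le (by norm_num) (by linarith)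
    have : (1:ℝ)/(4*1.3862943606) ≤ 0.1803369 := by norm_num
    linarith
  have hx0 : (0:ℝ) ≤ 1 + 1/(4*Real.log 4) := by positivity
  have hpow : (1 + 1/(4*Real.log 4))^4 ≤ 1.1803369^4 := pow_le_pow_left₀ hx0 hx 4
  have hF : (0:ℝ) < 1 + 4 * (Real.log 4 + Real.log (Real.log 4)) := by nlinarith
  nlinarith [mul_le_mul hpow
    (show 1 + 4 * (Real.log 4 + Real.log (Real.log 4)) ≤ 7.8548383 by nlinarith)
    (le_of_lt hF) (by positivity : (0:ℝ) ≤ (1.1803369:ℝ)^4)]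

lemma case5 : (1 + 1 / (5 * Real.log 5)) ^ 5 * (1 + 5 * Real.log (5 * Real.log 5))
    < 5 * Real.log 5 + 5 * Real.log (Real.log 5) + 2 * 5 + 1 := by
  obtain ⟨hLlo, hLhi⟩ := log5_bounds
  have h2lo := Real.log_two_gt_d9
  have h2hi := Real.log_two_lt_d9
  have hL0 : (0:ℝ) < Real.log 5 := by linarith
  rw [Real.log_mul (by norm_num) (ne_of_gt hL0)]
  have hq0 : (0:ℝ) < 5*Real.log 5/8 := by linarith
  have e1 : Real.log (5*Real.log 5/8 * (8/5)) = Real.log (5*Real.log 5/8) + Real.log (8/5) :=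
    Real.log_mul (ne_of_gt hq0) (by norm_num)
  rw [show 5*Real.log 5/8*(8/5) = Real.log 5 by ring] at e1
  have e2 : Real.log ((8:ℝ)/5) = Real.log 8 - Real.log 5 := Real.log_div (by norm_num) (by norm_num)
  have e3 : Real.log 8 = 3 * Real.log 2 := by
    rw [show (8:ℝ) = 2^3 by norm_num, Real.log_pow]; push_cast; ring
  have hqlo : (1.0058125:ℝ) ≤ 5*Real.log 5/8 := by linarith
  have hqhi : 5*Real.log 5/8 ≤ 1.006 := by linarith
  have hlhi : Real.log (5*Real.log 5/8) ≤ 1.006 - 1 := log_ub_of _ _ hq0 hqhi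
  have hllo : 1 - 1/1.0058125 ≤ Real.log (5*Real.log 5/8) := log_lb_of _ _ (by norm_num) hqlo
  have hllo' : (0.0057789:ℝ) ≤ Real.log (5*Real.log 5/8) := by
    have : (1:ℝ) - 1/1.0058125 ≥ 0.0057789 := by norm_num
    linarith
  have hllhi : Real.log (Real.log 5) ≤ 0.4761416 := by linarith
  have hlllo : 0.4756204 ≤ Real.log (Real.log 5) := by linarith
  have hx : 1 + 1/(5*Real.log 5) ≤ 1.1242777 := by
    have h1 : 1/(5*Real.log 5) ≤ 1/(5*1.6093) :=
      one_div_le_one_div_of_le (by norm_num) (by linarith)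
    have : (1:ℝ)/(5*1.6093) ≤ 0.1242777 := by norm_num
    linarith
  have hx0 : (0:ℝ) ≤ 1 + 1/(5*Real.log 5) := by positivity
  have hpow : (1 + 1/(5*Real.log 5))^5 ≤ 1.1242777^5 := pow_le_pow_left₀ hx0 hx 5
  have hF : (0:ℝ) < 1 + 5 * (Real.log 5 + Real.log (Real.log 5)) := by nlinarith
  nlinarith [mul_le_mul hpow
    (show 1 + 5 * (Real.log 5 + Real.log (Real.log 5)) ≤ 11.428708 by nlinarith)
    (le_of_lt hF) (by positivity : (0:ℝ) ≤ (1.1242777:ℝ)^5)]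

lemma case6 : (1 + 1 / (6 * Real.log 6)) ^ 6 * (1 + 6 * Real.log (6 * Real.log 6))
    < 6 * Real.log 6 + 6 * Real.log (Real.log 6) + 2 * 6 + 1 := by
  obtain ⟨h3lo, h3hi⟩ := log3_bounds
  have h2lo := Real.log_two_gt_d9
  have h2hi := Real.log_two_lt_d9
  have h6 : Real.log 6 = Real.log 2 + Real.log 3 := by
    rw [show (6:ℝ) = 2*3 by norm_num, Real.log_mul (by norm_num) (by norm_num)]
  have hLlo : (1.7917471803:ℝ) ≤ Real.log 6 := by rw [h6]; linarith
  have hLhi : Real.log 6 ≤ 1.7917671808 := by rw [h6]; linarith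
  have hL0 : (0:ℝ) < Real.log 6 := by linarith
  rw [Real.log_mul (by norm_num) (ne_of_gt hL0)]
  have hq0 : (0:ℝ) < 9*Real.log 6/16 := by linarith
  have e1 : Real.log (9*Real.log 6/16 * (16/9)) = Real.log (9*Real.log 6/16) + Real.log (16/9) :=
    Real.log_mul (ne_of_gt hq0) (by norm_num)
  rw [show 9*Real.log 6/16*(16/9) = Real.log 6 by ring] at e1
  have e2 : Real.log ((16:ℝ)/9) = Real.log 16 - Real.log 9 := Real.log_div (by norm_num) (by norm_num)
  have e3 : Real.log 16 = 4 * Real.log 2 := by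
    rw [show (16:ℝ) = 2^4 by norm_num, Real.log_pow]; push_cast; ring
  have e4 : Real.log 9 = 2 * Real.log 3 := by
    rw [show (9:ℝ) = 3^2 by norm_num, Real.log_pow]; push_cast; ring
  have hqlo : (1.0078577:ℝ) ≤ 9*Real.log 6/16 := by linarith
  have hqhi : 9*Real.log 6/16 ≤ 1.0078691 := by linarith
  have hlhi : Real.log (9*Real.log 6/16) ≤ 1.0078691 - 1 := log_ub_of _ _ hq0 hqhi
  have hllo : 1 - 1/1.0078577 ≤ Real.log (9*Real.log 6/16) := log_lb_of _ _ (by norm_num) hqlo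
  have hllo' : (0.0077964:ℝ) ≤ Real.log (9*Real.log 6/16) := by
    have : (1:ℝ) - 1/1.0078577 ≥ 0.0077964 := by norm_num
    linarith
  have hllhi : Real.log (Real.log 6) ≤ 0.5832579 := by linarith
  have hlllo : 0.5831451 ≤ Real.log (Real.log 6) := by linarith
  have hx : 1 + 1/(6*Real.log 6) ≤ 1.0930191 := by
    have h1 : 1/(6*Real.log 6) ≤ 1/(6*1.7917471803) :=
      one_div_le_one_div_of_le (by norm_num) (by linarith)
    have : (1:ℝ)/(6*1.7917471803) ≤ 0.0930191 := by norm_num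
    linarith
  have hx0 : (0:ℝ) ≤ 1 + 1/(6*Real.log 6) := by positivity
  have hpow : (1 + 1/(6*Real.log 6))^6 ≤ 1.0930191^6 := pow_le_pow_left₀ hx0 hx 6
  have hF : (0:ℝ) < 1 + 6 * (Real.log 6 + Real.log (Real.log 6)) := by nlinarith
  nlinarith [mul_le_mul hpow
    (show 1 + 6 * (Real.log 6 + Real.log (Real.log 6)) ≤ 15.2501507 by nlinarith)
    (le_of_lt hF) (by positivity : (0:ℝ) ≤ (1.0930191:ℝ)^6)]

lemma case7 : (1 + 1 / (7 * Real.log 7)) ^ 7 * (1 + 7 * Real.log (7 * Real.log 7))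
    < 7 * Real.log 7 + 7 * Real.log (Real.log 7) + 2 * 7 + 1 := by
  obtain ⟨hLlo, hLhi⟩ := log7_bounds
  have h2lo := Real.log_two_gt_d9
  have h2hi := Real.log_two_lt_d9
  have hL0 : (0:ℝ) < Real.log 7 := by linarith
  rw [Real.log_mul (by norm_num) (ne_of_gt hL0)]
  have hq0 : (0:ℝ) < Real.log 7/2 := by linarith
  have e1 : Real.log (Real.log 7/2 * 2) = Real.log (Real.log 7/2) + Real.log 2 :=
    Real.log_mul (ne_of_gt hq0) (by norm_num)
  rw [show Real.log 7/2*2 = Real.log 7 by ring] at e1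
  have hqlo : (0.97285:ℝ) ≤ Real.log 7/2 := by linarith
  have hqhi : Real.log 7/2 ≤ 0.97305 := by linarith
  have hlhi : Real.log (Real.log 7/2) ≤ 0.97305 - 1 := log_ub_of _ _ hq0 hqhi
  have hllo : 1 - 1/0.97285 ≤ Real.log (Real.log 7/2) := log_lb_of _ _ (by norm_num) hqlo
  have hllo' : (-0.0279078:ℝ) ≤ Real.log (Real.log 7/2) := by
    have : (1:ℝ) - 1/0.97285 ≥ -0.0279078 := by norm_num
    linarith
  have hllhi : Real.log (Real.log 7) ≤ 0.6661972 := by linarith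
  have hlllo : 0.6652393 ≤ Real.log (Real.log 7) := by linarith
  have hx : 1 + 1/(7*Real.log 7) ≤ 1.0734220 := by
    have h1 : 1/(7*Real.log 7) ≤ 1/(7*1.9457) :=
      one_div_le_one_div_of_le (by norm_num) (by linarith)
    have : (1:ℝ)/(7*1.9457) ≤ 0.0734220 := by norm_num
    linarith
  have hx0 : (0:ℝ) ≤ 1 + 1/(7*Real.log 7) := by positivity
  have hpow : (1 + 1/(7*Real.log 7))^7 ≤ 1.0734220^7 := pow_le_pow_left₀ hx0 hx 7
  have hF : (0:ℝ) < 1 + 7 * (Real.log 7 + Real.log (Real.log 7)) := by nlinarith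
  nlinarith [mul_le_mul hpow
    (show 1 + 7 * (Real.log 7 + Real.log (Real.log 7)) ≤ 19.2860805 by nlinarith)
    (le_of_lt hF) (by positivity : (0:ℝ) ≤ (1.0734220:ℝ)^7)]

set_option maxHeartbeats 1000000 in
lemma general_case (n : ℕ) (h8 : 8 ≤ n) :
    (1 + 1 / (n * Real.log n)) ^ n * (1 + n * Real.log (n * Real.log n))
      < n * Real.log n + n * Real.log (Real.log n) + 2 * n + 1 := by
  have hN : (8:ℝ) ≤ (n:ℝ) := by exact_mod_cast h8
  have hN0 : (0:ℝ) < (n:ℝ) := by linarith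
  have h2lo := Real.log_two_gt_d9
  have hL8 : Real.log 8 ≤ Real.log n := Real.log_le_log (by norm_num) hN
  have hlog8 : Real.log 8 = 3 * Real.log 2 := by
    rw [show (8:ℝ) = 2^3 by norm_num, Real.log_pow]; push_cast; ring
  have hL : (2.0794415:ℝ) ≤ Real.log n := by rw [hlog8] at hL8; linarith
  have hL0 : (0:ℝ) < Real.log n := by linarith
  rw [Real.log_mul (ne_of_gt hN0) (ne_of_gt hL0)]
  set N : ℝ := (n:ℝ) with hNdef
  set L : ℝ := Real.log N with hLdef
  set t : ℝ := 1/L with htdef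
  have ht0 : 0 < t := by positivity
  have htL : L * t = 1 := mul_one_div_cancel (ne_of_gt hL0)
  have ht : t ≤ 0.48091 := by
    rw [htdef, div_le_iff₀ hL0]
    nlinarith
  set ℓ : ℝ := Real.log L with hldef
  set P : ℝ := (1 + 1/(N*L))^n with hPdef
  have hx0 : (0:ℝ) ≤ 1/(N*L) := by positivity
  have h1 : P ≤ Real.exp t := by
    have ha : P ≤ (Real.exp (1/(N*L)))^n := by
      rw [hPdef]
      apply pow_le_pow_left₀ (by positivity)
      linarith [Real.add_one_le_exp (1/(N*L))]
    have hb : (Real.exp (1/(N*L)))^n = Real.exp (n * (1/(N*L))) := (Real.exp_nat_mul _ n).symm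
    have hc : (N:ℝ) * (1/(N*L)) = t := by
      rw [htdef]; field_simp
    rw [hb] at ha
    rw [hNdef] at hc
    rw [hc] at ha
    exact ha
  have h2 : Real.exp t ≤ 1 + t + t^2/2 + t^3*(2/9) := by
    have hb := Real.exp_bound' (le_of_lt ht0) (by linarith : t ≤ 1) (n := 3) (by norm_num)
    simp [Finset.sum_range_succ, Nat.factorial] at hb
    convert hb using 1
    ring
  have hP : P ≤ 1 + 1.29185 * t := by
    have ht2 : t*t ≤ 0.48091*t := mul_le_mul_of_nonneg_right ht (le_of_lt ht0)
    have ht3 : t*t*t ≤ 0.48091*(0.48091*t) := by nlinarith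
    nlinarith [h1, h2]
  have hP1 : (1:ℝ) ≤ P := one_le_pow₀ (by linarith)
  have hl : ℓ ≤ 0.36788 * L := by
    have h := Real.log_le_sub_one_of_pos (show (0:ℝ) < L / Real.exp 1 by positivity)
    rw [Real.log_div (ne_of_gt hL0) (Real.exp_ne_zero 1), Real.log_exp] at h
    have he := Real.exp_one_gt_d9
    have hd : L / Real.exp 1 ≤ L / 2.7182818283 :=
      div_le_div_of_nonneg_left (le_of_lt hL0) (by norm_num) (le_of_lt he)
    have h3 : L / 2.7182818283 ≤ 0.36788 * L := by
      rw [div_le_iff₀ (by norm_num)]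
      nlinarith
    linarith
  have hl0 : (0:ℝ) ≤ ℓ := Real.log_nonneg (by linarith)
  have hNl : N * ℓ ≤ 0.36788 * (N * L) := by
    have := mul_le_mul_of_nonneg_left hl (le_of_lt hN0)
    nlinarith
  have hNL : (16.6355:ℝ) ≤ N * L := by
    have := mul_le_mul hN hL (by norm_num) (by linarith : (0:ℝ) ≤ N)
    linarith
  have hF : 1 + N*L + N*ℓ ≤ 1.4280 * (N*L) := by nlinarith
  have hF0 : (0:ℝ) ≤ 1 + N*L + N*ℓ := by nlinarith
  have hprod : (P - 1) * (1 + N*L + N*ℓ) ≤ (1.29185*t) * (1.4280*(N*L)) :=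
    mul_le_mul (by linarith) hF hF0 (by positivity)
  have hkey : (1.29185*t) * (1.4280*(N*L)) = 1.8447618 * N * (L*t) := by ring
  rw [htL, mul_one] at hkey
  rw [hkey] at hprod
  nlinarith [hprod, hP1, hF0, hN]

theorem stmt_8 (n : ℕ) (hn : 3 ≤ n) :
    (1 + 1 / (n * Real.log n)) ^ n * (1 + n * Real.log (n * Real.log n))
      < n * Real.log n + n * Real.log (Real.log n) + 2 * n + 1 := by
  rcases lt_or_ge n 8 with h8 | h8
  · interval_cases n
    · push_cast; exact_mod_cast case3
    · push_cast; exact_mod_cast case4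
    · push_cast; exact_mod_cast case5
    · push_cast; exact_mod_cast case6
    · push_cast; exact_mod_cast case7
  · exact general_case n h8
end

section
/- For every natural number n ≥ 3 and every r ∈ (0,1), if K can be covered by s = (1+1/r)^n Θ_n homothetic copies of K with ratio r, then for any Borel probability measure ν on K, Δ(ν) ≤ 2 − 2(1−r)(1+1/r)^{−n}/Θ_n, where Θ_n ≥ 1 is any upper bound on the number-normalizing covering density. -/
/-!
Cut the unit ball `K` into `N` disjoint Borel pieces `Dᵢ`, each contained in one of the covering
balls of radius `r`, hence of diameter at most `2r`. On `K × K` we then have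
`‖x - y‖ ≤ 2 - (2 - 2r) · [x and y lie in the same piece]`, and integrating twice against `ν` gives
`Δ(ν) ≤ 2 - (2 - 2r) ∑ ν(Dᵢ)²`. By Cauchy–Schwarz `∑ ν(Dᵢ)² ≥ 1 / N`, and
`N ≤ (1 + 1/r)ⁿ Θ`.
-/

open MeasureTheory Pointwise

open scoped Function

theorem measurableSet_disjointed {X ι : Type*} [MeasurableSpace X] [Preorder ι]
    [LocallyFiniteOrderBot ι] {B : ι → Set X} (hB : ∀ i, MeasurableSet (B i)) (i : ι) :
    MeasurableSet (disjointed B i) :=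
  disjointedRec (fun _ j ht ↦ ht.diff (hB j)) (hB i)

theorem inv_card_le_sum_sq {ι : Type*} [Fintype ι] {f : ι → ℝ} (hf : ∑ i, f i = 1) :
    (Fintype.card ι : ℝ)⁻¹ ≤ ∑ i, f i ^ 2 := by
  have h := sq_sum_le_card_mul_sum_sq (s := Finset.univ) (f := f)
  rw [hf, one_pow, Finset.card_univ] at h
  have hcard : (0 : ℝ) < Fintype.card ι :=
    pos_of_mul_pos_left (one_pos.trans_le h) (by positivity)
  rwa [inv_le_iff_one_le_mul₀' hcard]

section Partition

variable {X : Type*} [PseudoMetricSpace X] {ι : Type*} [Fintype ι] {D : ι → Set X}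

-- The sum is `1` when `x` and `y` lie in the same piece and `0` otherwise.
theorem dist_le_sub_mul_sum_indicator_mul {δ : ℝ} (hD : Pairwise (Disjoint on D))
    (hδ : ∀ i, ∀ x ∈ D i, ∀ y ∈ D i, dist x y ≤ δ) {d : ℝ} {x y : X} (hxy : dist x y ≤ d)
    (hx : x ∈ ⋃ i, D i) :
    dist x y ≤ d - (d - δ) * ∑ i, (D i).indicator 1 x * (D i).indicator 1 y := by
  obtain ⟨i, hxi⟩ := Set.mem_iUnion.1 hx
  have hsum : ∑ j, (D j).indicator 1 x * (D j).indicator (1 : X → ℝ) y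
      = (D i).indicator 1 y := by
    rw [Finset.sum_eq_single i (fun j _ hji ↦ ?_) (by simp), Set.indicator_of_mem hxi,
      Pi.one_apply, one_mul]
    rw [Set.indicator_of_notMem fun hxj ↦ (hD hji).ne_of_mem hxj hxi rfl, zero_mul]
  rw [hsum]
  by_cases hyi : y ∈ D i
  · rw [Set.indicator_of_mem hyi, Pi.one_apply]
    linarith [hδ i x hxi y hyi]
  · rw [Set.indicator_of_notMem hyi]
    linarith

end Partition

section IndicatorIntegral

variable {X : Type*} [MeasurableSpace X] {ν : Measure X} [IsProbabilityMeasure ν]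
  {ι : Type*} [Fintype ι] {D : ι → Set X}

theorem integrable_const_sub_mul_sum_indicator (hD : ∀ i, MeasurableSet (D i)) (a b : ℝ)
    (c : ι → ℝ) : Integrable (fun x ↦ a - b * ∑ i, c i * (D i).indicator 1 x) ν :=
  (integrable_const a).sub <| (integrable_finsetSum _ fun i _ ↦
    ((integrable_const 1).indicator (hD i)).const_mul (c i)).const_mul b

theorem integral_const_sub_mul_sum_indicator (hD : ∀ i, MeasurableSet (D i)) (a b : ℝ)
    (c : ι → ℝ) :
    ∫ x, (a - b * ∑ i, c i * (D i).indicator 1 x) ∂ν = a - b * ∑ i, c i * ν.real (D i) := by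
  have hint : ∀ i ∈ Finset.univ, Integrable (fun x ↦ c i * (D i).indicator 1 x) ν :=
    fun i _ ↦ ((integrable_const 1).indicator (hD i)).const_mul (c i)
  rw [integral_sub (integrable_const a) ((integrable_finsetSum _ hint).const_mul b),
    integral_const, probReal_univ, one_smul, integral_const_mul, integral_finsetSum _ hint]
  simp_rw [integral_const_mul, integral_indicator_one (hD _)]

theorem sum_measureReal_eq_one (hDm : ∀ i, MeasurableSet (D i))
    (hD : Pairwise (Disjoint on D)) (hcover : ∀ᵐ x ∂ν, x ∈ ⋃ i, D i) :
    ∑ i, ν.real (D i) = 1 := by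
  rw [← measureReal_iUnion_fintype hD hDm, measureReal_def,
    (mem_ae_iff_prob_eq_one (MeasurableSet.iUnion hDm)).1 hcover, ENNReal.toReal_one]

end IndicatorIntegral

section MeanDistance

variable {X : Type*} [PseudoMetricSpace X] [MeasurableSpace X] {ν : Measure X}
  [IsProbabilityMeasure ν]

theorem integrable_dist_of_ae_mem [OpensMeasurableSpace X] {K : Set X} {d : ℝ}
    (hK : ∀ᵐ y ∂ν, y ∈ K) (hd : ∀ x ∈ K, ∀ y ∈ K, dist x y ≤ d) (x : X) :
    Integrable (dist x) ν := by
  obtain ⟨z, hz⟩ := hK.exists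
  refine (integrable_const (dist x z + d)).mono'
    (continuous_const.dist continuous_id).aestronglyMeasurable ?_
  filter_upwards [hK] with y hy
  rw [Real.norm_of_nonneg dist_nonneg]
  linarith [dist_triangle x z y, hd z hz y hy]

theorem lipschitzWith_integral_dist (h : ∀ x, Integrable (dist x) ν) :
    LipschitzWith 1 fun x ↦ ∫ y, dist x y ∂ν :=
  LipschitzWith.of_le_add fun x x' ↦ by
    calc ∫ y, dist x y ∂ν ≤ ∫ y, (dist x x' + dist x' y) ∂ν :=
          integral_mono (h x) ((integrable_const _).add (h x')) fun y ↦ dist_triangle x x' y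
      _ = (∫ y, dist x' y ∂ν) + dist x x' := by
          rw [integral_add (integrable_const _) (h x'), integral_const, probReal_univ, one_smul,
            add_comm]

theorem integral_integral_dist_le_sub_mul_sum_sq [OpensMeasurableSpace X] {K : Set X} {d δ : ℝ}
    {ι : Type*} [Fintype ι] {D : ι → Set X} (hDm : ∀ i, MeasurableSet (D i))
    (hD : Pairwise (Disjoint on D)) (hKD : K ⊆ ⋃ i, D i)
    (hδ : ∀ i, ∀ x ∈ D i, ∀ y ∈ D i, dist x y ≤ δ)
    (hK : ∀ᵐ x ∂ν, x ∈ K) (hd : ∀ x ∈ K, ∀ y ∈ K, dist x y ≤ d) :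
    ∫ x, ∫ y, dist x y ∂ν ∂ν ≤ d - (d - δ) * ∑ i, ν.real (D i) ^ 2 := by
  have hdist := integrable_dist_of_ae_mem hK hd
  set G : X → ℝ := fun x ↦ d - (d - δ) * ∑ i, ν.real (D i) * (D i).indicator 1 x
  have hG : Integrable G ν := integrable_const_sub_mul_sum_indicator hDm _ _ _
  have hFG : ∀ᵐ x ∂ν, ∫ y, dist x y ∂ν ≤ G x := by
    filter_upwards [hK] with x hx
    calc ∫ y, dist x y ∂ν
        ≤ ∫ y, (d - (d - δ) * ∑ i, (D i).indicator 1 x * (D i).indicator 1 y) ∂ν :=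
          integral_mono_ae (hdist x) (integrable_const_sub_mul_sum_indicator hDm _ _ _) <| by
            filter_upwards [hK] with y hy
            exact dist_le_sub_mul_sum_indicator_mul hD hδ (hd x hx y hy) (hKD hx)
      _ = G x := by
          simp_rw [integral_const_sub_mul_sum_indicator hDm, G, mul_comm]
  have hF : Integrable (fun x ↦ ∫ y, dist x y ∂ν) ν :=
    hG.mono' (lipschitzWith_integral_dist hdist).continuous.aestronglyMeasurable <| by
      filter_upwards [hFG] with x hx
      rwa [Real.norm_of_nonneg (integral_nonneg fun _ ↦ dist_nonneg)]
  calc ∫ x, ∫ y, dist x y ∂ν ∂ν ≤ ∫ x, G x ∂ν := integral_mono_ae hF hG hFG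
    _ = d - (d - δ) * ∑ i, ν.real (D i) ^ 2 := by
        simp_rw [G, integral_const_sub_mul_sum_indicator hDm, sq]

theorem integral_integral_dist_le_sub_div_card [OpensMeasurableSpace X] {K : Set X} {d δ : ℝ}
    {ι : Type*} [Fintype ι] {D : ι → Set X} (hDm : ∀ i, MeasurableSet (D i))
    (hD : Pairwise (Disjoint on D)) (hKD : K ⊆ ⋃ i, D i)
    (hδ : ∀ i, ∀ x ∈ D i, ∀ y ∈ D i, dist x y ≤ δ) (hδd : δ ≤ d)
    (hK : ∀ᵐ x ∂ν, x ∈ K) (hd : ∀ x ∈ K, ∀ y ∈ K, dist x y ≤ d) :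
    ∫ x, ∫ y, dist x y ∂ν ∂ν ≤ d - (d - δ) / Fintype.card ι := by
  have hsq := inv_card_le_sum_sq (sum_measureReal_eq_one hDm hD (hK.mono fun _ hx ↦ hKD hx))
  calc ∫ x, ∫ y, dist x y ∂ν ∂ν ≤ d - (d - δ) * ∑ i, ν.real (D i) ^ 2 :=
        integral_integral_dist_le_sub_mul_sum_sq hDm hD hKD hδ hK hd
    _ ≤ d - (d - δ) / Fintype.card ι :=
        sub_le_sub_left (mul_le_mul_of_nonneg_left hsq (sub_nonneg.2 hδd)) d

end MeanDistance

theorem stmt_9_general {E : Type*} [NormedAddCommGroup E] [NormedSpace ℝ E]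
    [MeasurableSpace E] [BorelSpace E]
    (n : ℕ)
    (r : ℝ) (hr : r ∈ Set.Ioo (0 : ℝ) 1)
    (Θ : ℝ)
    (N : ℕ) (hN : (N : ℝ) ≤ (1 + 1 / r) ^ n * Θ)
    (a : Fin N → E)
    (hcover : Metric.closedBall (0 : E) 1 ⊆
      ⋃ i, a i +ᵥ r • Metric.closedBall (0 : E) 1)
    (ν : Measure E) [IsProbabilityMeasure ν]
    (hν : ν (Metric.closedBall (0 : E) 1) = 1) :
    (∫ x, ∫ y, ‖x - y‖ ∂ν ∂ν) ≤ 2 - 2 * (1 - r) * ((1 + 1 / r) ^ n)⁻¹ / Θ := by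
  obtain ⟨hr0, hr1⟩ := hr
  set B : Fin N → Set E := fun i ↦ Metric.closedBall (a i) r
  have hcoverD : Metric.closedBall 0 1 ⊆ ⋃ i, disjointed B i := by
    rw [iUnion_disjointed]
    simpa only [affinity_unitClosedBall hr0.le] using hcover
  obtain ⟨i, -⟩ := Set.mem_iUnion.1 (hcover (Metric.mem_closedBall_self zero_le_one))
  have hN0 : (0 : ℝ) < N := Nat.cast_pos.2 i.pos
  have hdiam : ∀ (c : E) {ρ : ℝ}, 0 ≤ ρ → ∀ x ∈ Metric.closedBall c ρ,
      ∀ y ∈ Metric.closedBall c ρ, dist x y ≤ 2 * ρ := fun _ _ hρ _ hx _ hy ↦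
    (Metric.dist_le_diam_of_mem Metric.isBounded_closedBall hx hy).trans
      (Metric.diam_closedBall hρ)
  have hmean := integral_integral_dist_le_sub_div_card (ν := ν)
    (measurableSet_disjointed fun _ ↦ measurableSet_closedBall) (disjoint_disjointed B) hcoverD
    (fun i x hx y hy ↦ hdiam (a i) hr0.le x (disjointed_subset B i hx) y
      (disjointed_subset B i hy))
    (by linarith : 2 * r ≤ 2) ((mem_ae_iff_prob_eq_one measurableSet_closedBall).2 hν)
    (by simpa only [mul_one] using hdiam 0 zero_le_one)
  simp only [dist_eq_norm, Fintype.card_fin] at hmean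
  have hinv : ((1 + 1 / r) ^ n)⁻¹ / Θ ≤ (N : ℝ)⁻¹ := by
    rw [div_eq_mul_inv, ← mul_inv]
    exact inv_anti₀ hN0 hN
  calc (∫ x, ∫ y, ‖x - y‖ ∂ν ∂ν) ≤ 2 - (2 - 2 * r) / N := hmean
    _ ≤ 2 - (2 - 2 * r) * (((1 + 1 / r) ^ n)⁻¹ / Θ) := by
        rw [div_eq_mul_inv]
        gcongr
        linarith
    _ = 2 - 2 * (1 - r) * ((1 + 1 / r) ^ n)⁻¹ / Θ := by ring

theorem stmt_9 {E : Type*} [NormedAddCommGroup E] [NormedSpace ℝ E]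
    [MeasurableSpace E] [BorelSpace E] [FiniteDimensional ℝ E]
    (n : ℕ) (hn : 3 ≤ n) (hdim : Module.finrank ℝ E = n)
    (r : ℝ) (hr : r ∈ Set.Ioo (0 : ℝ) 1)
    (Θ : ℝ) (hΘ : 1 ≤ Θ)
    (N : ℕ) (hN : (N : ℝ) ≤ (1 + 1 / r) ^ n * Θ)
    (a : Fin N → E)
    (hcover : Metric.closedBall (0 : E) 1 ⊆
      ⋃ i, a i +ᵥ r • Metric.closedBall (0 : E) 1)
    (ν : Measure E) [IsProbabilityMeasure ν]
    (hν : ν (Metric.closedBall (0 : E) 1) = 1) :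
    (∫ x, ∫ y, ‖x - y‖ ∂ν ∂ν) ≤ 2 - 2 * (1 - r) * ((1 + 1 / r) ^ n)⁻¹ / Θ :=
  stmt_9_general n r hr Θ N hN a hcover ν hν
end

section
/- For every natural number n ≥ 3, the function r ↦ (1−r)(1+1/r)^{−n} on (0,1) attains its maximum at r = (√(n²+6n+1) − n − 1)/2. -/
/-!
Write `r₀` for the positive root of `r² + (n + 1) r - n`. Then
`f'(r) = (r / (1 + r))^(n-1) (r + r₀ + n + 1) / (1 + r)² · (r₀ - r)`,
whose first factor is positive on `(0, 1)`; so `f` increases up to `r₀` and decreases after it.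
-/

open Set

theorem isMaxOn_of_monotoneOn_Ioc_of_antitoneOn_Ico {α β : Type*} [LinearOrder α] [Preorder β]
    {f : α → β} {a b c : α} (hc : c ∈ Ioo a b) (hmono : MonotoneOn f (Ioc a c))
    (hanti : AntitoneOn f (Ico c b)) : IsMaxOn f (Ioo a b) c := by
  intro x hx
  rcases le_total x c with hxc | hcx
  · exact hmono ⟨hx.1, hxc⟩ ⟨hc.1, le_rfl⟩ hxc
  · exact hanti ⟨le_rfl, hc.2⟩ ⟨hcx, hx.2⟩ hcx

theorem isMaxOn_Ioo_of_hasDerivAt_mul_sub {f g : ℝ → ℝ} {a b c : ℝ} (hc : c ∈ Ioo a b)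
    (hf : ∀ x ∈ Ioo a b, HasDerivAt f (g x * (c - x)) x) (hg : ∀ x ∈ Ioo a b, 0 ≤ g x) :
    IsMaxOn f (Ioo a b) c := by
  have hcont : ContinuousOn f (Ioo a b) := fun x hx => (hf x hx).continuousAt.continuousWithinAt
  have hmono : MonotoneOn f (Ioc a c) := by
    refine monotoneOn_of_hasDerivWithinAt_nonneg (f' := fun x => g x * (c - x)) (convex_Ioc a c)
      (hcont.mono (Ioc_subset_Ioo_right hc.2)) (fun x hx => ?_) (fun x hx => ?_) <;>
      rw [interior_Ioc] at hx
    · exact (hf x ⟨hx.1, hx.2.trans hc.2⟩).hasDerivWithinAt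
    · exact mul_nonneg (hg x ⟨hx.1, hx.2.trans hc.2⟩) (sub_nonneg.2 hx.2.le)
  have hanti : AntitoneOn f (Ico c b) := by
    refine antitoneOn_of_hasDerivWithinAt_nonpos (f' := fun x => g x * (c - x)) (convex_Ico c b)
      (hcont.mono (Ico_subset_Ioo_left hc.1)) (fun x hx => ?_) (fun x hx => ?_) <;>
      rw [interior_Ico] at hx
    · exact (hf x ⟨hc.1.trans hx.1, hx.2⟩).hasDerivWithinAt
    · exact mul_nonpos_of_nonneg_of_nonpos (hg x ⟨hc.1.trans hx.1, hx.2⟩)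
        (sub_nonpos.2 hx.1.le)
  exact isMaxOn_of_monotoneOn_Ioc_of_antitoneOn_Ico hc hmono hanti

noncomputable section

def weight (n : ℕ) (r : ℝ) : ℝ := (1 - r) * (r / (1 + r)) ^ n

theorem hasDerivAt_weight {n : ℕ} (hn : n ≠ 0) {r : ℝ} (hr : 1 + r ≠ 0) :
    HasDerivAt (weight n)
      ((r / (1 + r)) ^ (n - 1) * (n * (1 - r) - r * (1 + r)) / (1 + r) ^ 2) r := by
  have hquot : HasDerivAt (fun r : ℝ => r / (1 + r)) (1 / (1 + r) ^ 2) r :=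
    ((hasDerivAt_id' r).div ((hasDerivAt_id' r).const_add 1) hr).congr_deriv (by simp)
  unfold weight
  refine (((hasDerivAt_id' r).const_sub 1).mul (hquot.fun_pow n)).congr_deriv ?_
  obtain ⟨m, rfl⟩ := Nat.exists_eq_add_one_of_ne_zero hn
  simp only [Nat.add_sub_cancel, pow_succ, Nat.cast_add, Nat.cast_one]
  field_simp
  ring

def criticalPoint (n : ℕ) : ℝ := (Real.sqrt ((n : ℝ) ^ 2 + 6 * n + 1) - n - 1) / 2

theorem criticalPoint_sq_add (n : ℕ) : criticalPoint n ^ 2 + (n + 1) * criticalPoint n = n := by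
  have hs : Real.sqrt ((n : ℝ) ^ 2 + 6 * n + 1) ^ 2 = (n : ℝ) ^ 2 + 6 * n + 1 :=
    Real.sq_sqrt (by positivity)
  unfold criticalPoint
  linear_combination hs / 4

theorem criticalPoint_mem_Ioo {n : ℕ} (hn : n ≠ 0) : criticalPoint n ∈ Ioo (0 : ℝ) 1 := by
  have hn' : (1 : ℝ) ≤ n := by exact_mod_cast Nat.one_le_iff_ne_zero.2 hn
  have hs : Real.sqrt ((n : ℝ) ^ 2 + 6 * n + 1) ^ 2 = (n : ℝ) ^ 2 + 6 * n + 1 :=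
    Real.sq_sqrt (by positivity)
  have hs₀ := Real.sqrt_nonneg ((n : ℝ) ^ 2 + 6 * n + 1)
  unfold criticalPoint
  constructor <;> nlinarith

theorem weight_deriv_numerator_eq (n : ℕ) (r : ℝ) :
    n * (1 - r) - r * (1 + r) = (r + criticalPoint n + n + 1) * (criticalPoint n - r) := by
  linear_combination -criticalPoint_sq_add n

theorem isMaxOn_weight_criticalPoint {n : ℕ} (hn : n ≠ 0) :
    IsMaxOn (weight n) (Ioo 0 1) (criticalPoint n) := by
  have hr₀ := criticalPoint_mem_Ioo hn
  refine isMaxOn_Ioo_of_hasDerivAt_mul_sub hr₀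
    (g := fun r => (r / (1 + r)) ^ (n - 1) * (r + criticalPoint n + n + 1) / (1 + r) ^ 2)
    (fun r hr => (hasDerivAt_weight hn (by linarith [hr.1])).congr_deriv ?_) (fun r hr => ?_)
  · rw [weight_deriv_numerator_eq]
    ring
  · have : 0 < r := hr.1
    have : 0 < criticalPoint n := hr₀.1
    positivity

end

theorem stmt_10 (n : ℕ) (hn : 3 ≤ n) :
    (Real.sqrt ((n : ℝ) ^ 2 + 6 * n + 1) - n - 1) / 2 ∈ Set.Ioo (0 : ℝ) 1 ∧
    IsMaxOn (fun r : ℝ => (1 - r) * (r / (1 + r)) ^ n) (Set.Ioo (0 : ℝ) 1)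
      ((Real.sqrt ((n : ℝ) ^ 2 + 6 * n + 1) - n - 1) / 2) :=
  have hn₀ : n ≠ 0 := by omega
  ⟨criticalPoint_mem_Ioo hn₀, isMaxOn_weight_criticalPoint hn₀⟩
end

section
/- For every natural number n ≥ 2, if K is the unit cube [−1,1]^n with the maximum norm and ν is any Borel probability measure on K, then Δ(ν) ≤ 2(1 − 2^{−n}). -/
open MeasureTheory Finset

noncomputable def cl (t : ℝ) : ℝ := max (-1) (min 1 t)

lemma cl_cont : Continuous cl :=
  continuous_const.max (continuous_const.min continuous_id)

lemma cl_abs_le (t : ℝ) : |cl t| ≤ 1 := by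
  rw [abs_le]
  exact ⟨le_max_left _ _, max_le (by norm_num) (min_le_left _ _)⟩

lemma cl_eq {t : ℝ} (h1 : -1 ≤ t) (h2 : t ≤ 1) : cl t = t := by
  rw [cl, min_eq_right h2, max_eq_right h1]

lemma key1 {a b : ℝ} (ha : |a| ≤ 1) (hb : |b| ≤ 1) : |a - b| ≤ 1 - a * b := by
  rw [abs_le] at ha hb
  obtain ⟨ha1, ha2⟩ := ha; obtain ⟨hb1, hb2⟩ := hb
  rw [abs_le]
  constructor <;> nlinarith

lemma fac_nonneg (s t : ℝ) : 0 ≤ 1 + cl s * cl t := by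
  have h1 : |cl s * cl t| ≤ 1 := by
    rw [abs_mul]
    exact mul_le_one₀ (cl_abs_le s) (abs_nonneg _) (cl_abs_le t)
  rw [abs_le] at h1; linarith [h1.1]

lemma fac_le (s t : ℝ) : 1 + cl s * cl t ≤ 2 := by
  have h1 : |cl s * cl t| ≤ 1 := by
    rw [abs_mul]
    exact mul_le_one₀ (cl_abs_le s) (abs_nonneg _) (cl_abs_le t)
  rw [abs_le] at h1; linarith [h1.2]

theorem stmt_19 (n : ℕ) (hn : 2 ≤ n)
    (ν : Measure (Fin n → ℝ)) [IsProbabilityMeasure ν]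
    (hν : ν (Set.Icc (fun _ => (-1 : ℝ)) (fun _ => (1 : ℝ))) = 1) :
    (∫ x, ∫ y, ‖x - y‖ ∂ν ∂ν) ≤ 2 * (1 - (2 : ℝ) ^ (-(n : ℤ))) := by
  have hn0 : 0 < n := by omega
  set S : Set (Fin n → ℝ) := Set.Icc (fun _ => (-1:ℝ)) (fun _ => (1:ℝ)) with hS
  have hmeas : MeasurableSet S := measurableSet_Icc
  have hae : ∀ᵐ x ∂ν, x ∈ S :=
    mem_ae_iff.2 ((prob_compl_eq_zero_iff hmeas).2 hν)
  set c : ℝ := 2 / 2 ^ n with hc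
  have hcpos : 0 < c := by positivity
  set P : (Fin n → ℝ) → (Fin n → ℝ) → ℝ :=
    fun x y => ∏ i, (1 + cl (x i) * cl (y i)) with hP
  have hPnn : ∀ x y, 0 ≤ P x y := fun x y =>
    Finset.prod_nonneg fun i _ => fac_nonneg _ _
  have hPle : ∀ x y, P x y ≤ 2 ^ n := by
    intro x y
    calc P x y ≤ ∏ _i : Fin n, (2:ℝ) :=
          Finset.prod_le_prod (fun i _ => fac_nonneg _ _) (fun i _ => fac_le _ _)
      _ = 2 ^ n := by simp [Finset.prod_const]
  have hcP2 : ∀ x y, c * P x y ≤ 2 := by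
    intro x y
    have := hPle x y
    have h2 : c * P x y ≤ c * 2 ^ n := by
      exact mul_le_mul_of_nonneg_left this (le_of_lt hcpos)
    have : c * 2 ^ n = 2 := by
      rw [hc]; field_simp
    linarith
  -- pointwise bound
  have hpoint : ∀ x ∈ S, ∀ y ∈ S, ‖x - y‖ ≤ 2 - c * P x y := by
    intro x hx y hy
    have hC : (0:ℝ) ≤ 2 - c * P x y := by linarith [hcP2 x y]
    rw [pi_norm_le_iff_of_nonneg hC]
    intro i
    have hxi : |x i| ≤ 1 := abs_le.2 ⟨hx.1 i, hx.2 i⟩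
    have hyi : |y i| ≤ 1 := abs_le.2 ⟨hy.1 i, hy.2 i⟩
    have hclx : cl (x i) = x i := cl_eq (hx.1 i) (hx.2 i)
    have hcly : cl (y i) = y i := cl_eq (hy.1 i) (hy.2 i)
    have hkey : |x i - y i| ≤ 1 - x i * y i := key1 hxi hyi
    -- c * P x y ≤ 1 + x i * y i
    have hsplit : P x y = (1 + cl (x i) * cl (y i)) *
        ∏ j ∈ univ.erase i, (1 + cl (x j) * cl (y j)) :=
      (Finset.mul_prod_erase univ _ (mem_univ i)).symm
    have herase : ∏ j ∈ univ.erase i, (1 + cl (x j) * cl (y j)) ≤ 2 ^ (n - 1) := by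
      calc ∏ j ∈ univ.erase i, (1 + cl (x j) * cl (y j))
          ≤ ∏ _j ∈ univ.erase i, (2:ℝ) :=
            Finset.prod_le_prod (fun j _ => fac_nonneg _ _) (fun j _ => fac_le _ _)
        _ = 2 ^ (n - 1) := by
            rw [Finset.prod_const, card_erase_of_mem (mem_univ i), card_univ,
              Fintype.card_fin]
    have hcpow : c * 2 ^ (n - 1) = 1 := by
      rw [hc]
      have : (2:ℝ) ^ n = 2 * 2 ^ (n - 1) := by
        rw [← pow_succ']
        congr 1
        omega
      rw [this]
      field_simp
    have hfnn := fac_nonneg (x i) (y i)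
    have hcPle : c * P x y ≤ 1 + x i * y i := by
      rw [hsplit]
      calc c * ((1 + cl (x i) * cl (y i)) *
            ∏ j ∈ univ.erase i, (1 + cl (x j) * cl (y j)))
          ≤ c * ((1 + cl (x i) * cl (y i)) * 2 ^ (n - 1)) := by
            apply mul_le_mul_of_nonneg_left _ (le_of_lt hcpos)
            exact mul_le_mul_of_nonneg_left herase hfnn
        _ = 1 + x i * y i := by
            rw [hclx, hcly] at *
            nlinarith [hcpow]
    have : ‖(x - y) i‖ = |x i - y i| := by
      simp [Real.norm_eq_abs]
    rw [this]
    linarith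
  -- continuity of P
  have hPcont : Continuous (fun p : (Fin n → ℝ) × (Fin n → ℝ) => P p.1 p.2) := by
    apply continuous_finset_prod
    intro i _
    exact continuous_const.add
      (((cl_cont.comp ((continuous_apply i).comp continuous_fst))).mul
        ((cl_cont.comp ((continuous_apply i).comp continuous_snd))))
  have hGmeas : StronglyMeasurable
      (fun p : (Fin n → ℝ) × (Fin n → ℝ) => 2 - c * P p.1 p.2) :=
    (continuous_const.sub (continuous_const.mul hPcont)).stronglyMeasurable
  -- integrability helpers
  have hbdd : ∀ {f : (Fin n → ℝ) → ℝ}, AEStronglyMeasurable f ν →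
      ∀ C : ℝ, (∀ x, |f x| ≤ C) → Integrable f ν := by
    intro f hf C h
    exact ⟨hf, HasFiniteIntegral.of_bounded (C := C)
      (Filter.Eventually.of_forall fun x => by simpa using h x)⟩
  have hGabs : ∀ x y, |2 - c * P x y| ≤ 2 + c * 2 ^ n := by
    intro x y
    rw [abs_le]
    constructor
    · have h2 := hcP2 x y
      have h3 : 0 ≤ c * 2 ^ n := by positivity
      linarith
    · have h1 : 0 ≤ c * P x y := mul_nonneg (le_of_lt hcpos) (hPnn x y)
      have h3 : 0 ≤ c * 2 ^ n := by positivity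
      linarith
  have hGint : ∀ x, Integrable (fun y => 2 - c * P x y) ν := by
    intro x
    exact hbdd ((continuous_const.sub (continuous_const.mul
      (hPcont.comp (Continuous.prodMk_right x)))).aestronglyMeasurable)
      (2 + c * 2 ^ n) (hGabs x)
  -- inner comparison
  have hinner : ∀ᵐ x ∂ν, (∫ y, ‖x - y‖ ∂ν) ≤ ∫ y, (2 - c * P x y) ∂ν := by
    filter_upwards [hae] with x hx
    apply integral_mono_of_nonneg (Filter.Eventually.of_forall fun y => norm_nonneg _)
      (hGint x)
    filter_upwards [hae] with y hy
    exact hpoint x hx y hy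
  -- outer comparison
  have houterInt : Integrable (fun x => ∫ y, (2 - c * P x y) ∂ν) ν := by
    apply hbdd (hGmeas.integral_prod_right').aestronglyMeasurable (2 + c * 2 ^ n)
    intro x
    have h1 : ‖∫ y, (2 - c * P x y) ∂ν‖ ≤ (2 + c * 2 ^ n) * (ν Set.univ).toReal := by
      apply norm_integral_le_of_norm_le_const
      exact Filter.Eventually.of_forall fun y => by
        rw [Real.norm_eq_abs]; exact hGabs x y
    rw [Real.norm_eq_abs] at h1
    simpa using h1
  have houter : (∫ x, ∫ y, ‖x - y‖ ∂ν ∂ν) ≤ ∫ x, ∫ y, (2 - c * P x y) ∂ν ∂ν := by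
    apply integral_mono_of_nonneg
      (Filter.Eventually.of_forall fun x => integral_nonneg fun y => norm_nonneg _)
      houterInt hinner
  -- expansion of P
  set m : Finset (Fin n) → ℝ := fun T => ∫ y, ∏ i ∈ T, cl (y i) ∂ν with hm
  have hPexp : ∀ x y, P x y = ∑ T ∈ (univ : Finset (Fin n)).powerset,
      (∏ i ∈ T, cl (x i)) * ∏ i ∈ T, cl (y i) := by
    intro x y
    have h1 : P x y = ∏ i, (cl (x i) * cl (y i) + 1) := by
      rw [hP]; exact Finset.prod_congr rfl fun i _ => by ring
    rw [h1, Finset.prod_add]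
    apply Finset.sum_congr rfl
    intro T _
    rw [Finset.prod_mul_distrib]
    simp
  have hprodcont : ∀ T : Finset (Fin n), Continuous (fun y : Fin n → ℝ => ∏ i ∈ T, cl (y i)) := by
    intro T
    apply continuous_finset_prod
    intro i _
    exact cl_cont.comp (continuous_apply i)
  have hprodabs : ∀ (T : Finset (Fin n)) (y : Fin n → ℝ), |∏ i ∈ T, cl (y i)| ≤ 1 := by
    intro T y
    rw [Finset.abs_prod]
    exact Finset.prod_le_one (fun i _ => abs_nonneg _) (fun i _ => cl_abs_le _)
  have hprodint : ∀ T : Finset (Fin n), Integrable (fun y => ∏ i ∈ T, cl (y i)) ν := by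
    intro T
    exact hbdd (hprodcont T).aestronglyMeasurable 1 (hprodabs T)
  have hinnerP : ∀ x, ∫ y, P x y ∂ν
      = ∑ T ∈ (univ : Finset (Fin n)).powerset, (∏ i ∈ T, cl (x i)) * m T := by
    intro x
    simp_rw [hPexp x]
    rw [integral_finset_sum]
    · exact Finset.sum_congr rfl fun T _ => integral_const_mul _ _
    · intro T _
      exact (hprodint T).const_mul _
  have hinnerG : ∀ x, ∫ y, (2 - c * P x y) ∂ν
      = 2 - c * ∑ T ∈ (univ : Finset (Fin n)).powerset, (∏ i ∈ T, cl (x i)) * m T := by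
    intro x
    rw [integral_sub (integrable_const 2)]
    · rw [integral_const_mul, hinnerP x]
      simp
    · apply Integrable.const_mul
      refine hbdd ((hPcont.comp (Continuous.prodMk_right x)).aestronglyMeasurable) (2 ^ n)
        fun y => abs_le.2 ⟨?_, ?_⟩
      · have h1 := hPnn x y
        have h2 : (0:ℝ) ≤ 2 ^ n := by positivity
        linarith
      · exact hPle x y
  have hmabs : ∀ T, |m T| ≤ 1 := by
    intro T
    rw [hm]
    have h1 : ‖∫ y, ∏ i ∈ T, cl (y i) ∂ν‖ ≤ 1 * (ν Set.univ).toReal := by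
      apply norm_integral_le_of_norm_le_const
      exact Filter.Eventually.of_forall fun y => by
        rw [Real.norm_eq_abs]; exact hprodabs T y
    rw [Real.norm_eq_abs] at h1
    simpa using h1
  have houterG : ∫ x, ∫ y, (2 - c * P x y) ∂ν ∂ν
      = 2 - c * ∑ T ∈ (univ : Finset (Fin n)).powerset, (m T) ^ 2 := by
    simp_rw [hinnerG]
    rw [integral_sub (integrable_const 2) (by
      apply Integrable.const_mul
      apply integrable_finset_sum
      intro T _
      exact (hprodint T).mul_const _)]
    rw [integral_const, integral_const_mul,
      integral_finset_sum _ (fun T _ => (hprodint T).mul_const _)]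
    have heq : ∀ T ∈ (univ : Finset (Fin n)).powerset,
        (∫ x, (∏ i ∈ T, cl (x i)) * m T ∂ν) = (m T) ^ 2 := by
      intro T _
      rw [integral_mul_const, sq]
    rw [Finset.sum_congr rfl heq]
    simp
  have hm_empty : m ∅ = 1 := by
    rw [hm]
    simp
  have hsum_ge : (1:ℝ) ≤ ∑ T ∈ (univ : Finset (Fin n)).powerset, (m T) ^ 2 := by
    have h0 : (m ∅)^2 = 1 := by rw [hm_empty]; norm_num
    calc (1:ℝ) = (m ∅)^2 := h0.symm
      _ ≤ ∑ T ∈ (univ : Finset (Fin n)).powerset, (m T) ^ 2 :=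
        Finset.single_le_sum (f := fun T => (m T) ^ 2) (fun T _ => sq_nonneg _) (Finset.empty_mem_powerset _)
  have hfinal : (2:ℝ) * (1 - (2:ℝ) ^ (-(n:ℤ))) = 2 - c := by
    rw [hc]
    rw [zpow_neg, zpow_natCast]
    field_simp
  rw [hfinal]
  calc (∫ x, ∫ y, ‖x - y‖ ∂ν ∂ν) ≤ ∫ x, ∫ y, (2 - c * P x y) ∂ν ∂ν := houter
    _ = 2 - c * ∑ T ∈ (univ : Finset (Fin n)).powerset, (m T) ^ 2 := houterG
    _ ≤ 2 - c := by nlinarith [hsum_ge, hcpos]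
end
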